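/- Mass conservation for the Crank–Nicolson (CN) scheme with discretized multiplicative noise: let Δt > 0, ε ∈ ℝ, let f̃_0, …, f̃_N be real numbers, let σ ≥ 1 be an integer, and let u⁰, u¹ ∈ ℂ^{N+1}. Assume that for every 0 ≤ j ≤ N one has i·(u¹_j − u⁰_j)/Δt + D₂u^{1/2}_j + |u^{1/2}_j|^{2σ}·u^{1/2}_j = ε·f̃_j·u^{1/2}_j, where u^{1/2}_j := (u⁰_j + u¹_j)/2 (extended by the Neumann conventions). Then M_dis[u¹] = M_dis[u⁰]. -/

import Mathlib

/-! The scheme is tested against `conj u^{1/2}_j` with the weights `Δx_j + Δx_{j-1}` of the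
discrete mass. The time difference then contributes `(|u¹_j|² - |u⁰_j|²) / (2Δt)`, the nonlinear
and noise terms contribute real numbers, and by a discrete Green identity (summation by parts,
with vanishing boundary fluxes thanks to the Neumann extension) so does the diffusion term.
Taking imaginary parts leaves `(M_dis[u¹] - M_dis[u⁰]) / Δt = 0`. -/

open Finset

/-- Extended mesh size `Δx_j` for `j ∈ {-1, 0, …, N}`, with the conventions
`Δx_{-1} := Δx_0` and `Δx_N := Δx_{N-1}`. -/
noncomputable def meshDx (N : ℕ) (x : ℕ → ℝ) (j : ℤ) : ℝ :=
  if j ≤ 0 then x 1 - x 0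
  else if (N : ℤ) ≤ j then x N - x (N - 1)
  else x (j.toNat + 1) - x j.toNat

/-- Neumann extension of a vector `u ∈ ℂ^{N+1}`: `u_{-1} := u_0`, `u_{N+1} := u_N`. -/
noncomputable def neumannExt (N : ℕ) (u : ℕ → ℂ) (j : ℤ) : ℂ :=
  if j ≤ 0 then u 0
  else if (N : ℤ) ≤ j then u N
  else u j.toNat

/-- Discrete second-difference operator on the (possibly non-uniform) mesh. -/
noncomputable def D2 (N : ℕ) (x : ℕ → ℝ) (u : ℕ → ℂ) (j : ℕ) : ℂ :=
  2 * neumannExt N u ((j : ℤ) - 1) /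
      ((meshDx N x ((j : ℤ) - 1) : ℂ) * ((meshDx N x ((j : ℤ) - 1) : ℂ) + (meshDx N x (j : ℤ) : ℂ)))
    - 2 * neumannExt N u (j : ℤ) / ((meshDx N x ((j : ℤ) - 1) : ℂ) * (meshDx N x (j : ℤ) : ℂ))
    + 2 * neumannExt N u ((j : ℤ) + 1) /
      (((meshDx N x ((j : ℤ) - 1) : ℂ) + (meshDx N x (j : ℤ) : ℂ)) * (meshDx N x (j : ℤ) : ℂ))

/-- Discrete mass `M_dis[u] = (1/2)·Σ_{j=0}^{N} |u_j|²·(Δx_j + Δx_{j-1})`. -/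
noncomputable def Mdis (N : ℕ) (x : ℕ → ℝ) (u : ℕ → ℂ) : ℝ :=
  (1 / 2) * ∑ j ∈ Finset.range (N + 1),
    ‖u j‖ ^ 2 * (meshDx N x (j : ℤ) + meshDx N x ((j : ℤ) - 1))

open ComplexConjugate

/-- Twice the width of the dual cell around `x_j`; `Mdis` weighs `|u_j|²` by half of it. -/
noncomputable def dualMesh (N : ℕ) (x : ℕ → ℝ) (j : ℤ) : ℝ :=
  meshDx N x j + meshDx N x (j - 1)

noncomputable def neumannFlux (N : ℕ) (x : ℕ → ℝ) (u : ℕ → ℂ) (j : ℤ) : ℂ :=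
  (neumannExt N u j - neumannExt N u (j - 1)) / meshDx N x (j - 1)

theorem Finset.sum_range_succ_sub_mul {R : Type*} [CommRing R] (f g : ℕ → R) (n : ℕ) :
    ∑ j ∈ range (n + 1), (f (j + 1) - f j) * g j
      = f (n + 1) * g n - f 0 * g 0 - ∑ j ∈ range n, f (j + 1) * (g (j + 1) - g j) := by
  induction n with
  | zero => simp only [zero_add, sum_range_one, range_zero, sum_empty]; ring
  | succ n ih => rw [sum_range_succ, ih, sum_range_succ]; ring

theorem add_mul_three_point_stencil {K : Type*} [Field K] {a b : K} (ha : a ≠ 0) (hb : b ≠ 0)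
    (hab : a + b ≠ 0) (p q r : K) :
    (b + a) * (2 * p / (a * (a + b)) - 2 * q / (a * b) + 2 * r / ((a + b) * b))
      = 2 * ((r - q) / b - (q - p) / a) := by
  field_simp
  ring

theorem Complex.im_I_mul_sub_mul_conj_midpoint (a b : ℂ) :
    (I * (b - a) * conj ((a + b) / 2)).im = (‖b‖ ^ 2 - ‖a‖ ^ 2) / 2 := by
  simp only [Complex.sq_norm, normSq_apply, mul_im, mul_re, I_re, I_im, sub_re, sub_im, add_re,
    add_im, conj_re, conj_im, div_ofNat_re, div_ofNat_im]
  ring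

theorem Complex.midpoint_mass_balance {a b d : ℂ} {Δt r s : ℝ} (hΔt : Δt ≠ 0)
    (h : I * (b - a) / Δt + d + r * ((a + b) / 2) = s * ((a + b) / 2)) (c : ℝ) :
    (‖b‖ ^ 2 - ‖a‖ ^ 2) / 2 * c = -Δt * ((c : ℂ) * d * conj ((a + b) / 2)).im := by
  set m := (a + b) / 2
  have hstep : I * (b - a) = Δt * (((s - r : ℝ) : ℂ) * m - d) := by
    rw [← mul_div_cancel₀ (I * (b - a)) (ofReal_ne_zero.2 hΔt)]
    push_cast
    linear_combination (Δt : ℂ) * h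
  have hreal : I * (b - a) * conj m * c
      = (((s - r) * Δt * c : ℝ) : ℂ) * (m * conj m) - Δt * ((c : ℂ) * d * conj m) := by
    rw [hstep]
    push_cast
    ring
  have := congrArg im hreal
  rwa [im_mul_ofReal, im_I_mul_sub_mul_conj_midpoint, sub_im, mul_conj, ← ofReal_mul, ofReal_im,
    zero_sub, im_ofReal_mul, ← neg_mul] at this

section Mesh

variable {N : ℕ} {x : ℕ → ℝ}

theorem meshDx_pos (hN : 1 ≤ N) (hx : ∀ j, j < N → x j < x (j + 1)) (j : ℤ) :
    0 < meshDx N x j := by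
  unfold meshDx
  split_ifs
  · linarith [hx 0 hN]
  · have := hx (N - 1) (by omega)
    rw [Nat.sub_add_cancel hN] at this
    linarith
  · have := hx j.toNat (by omega)
    linarith

theorem neumannExt_natCast_of_le (u : ℕ → ℂ) {j : ℕ} (hj : j ≤ N) :
    neumannExt N u j = u j := by
  unfold neumannExt
  split_ifs
  · rw [show j = 0 by omega]
  · rw [show j = N by omega]
  · rfl

theorem neumannFlux_zero (u : ℕ → ℂ) : neumannFlux N x u 0 = 0 := by
  simp [neumannFlux, neumannExt]

theorem neumannFlux_succ_self (u : ℕ → ℂ) : neumannFlux N x u (N + 1) = 0 := by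
  have hN1 : neumannExt N u (N + 1) = u N := by
    rw [neumannExt, if_neg (by omega), if_pos (by omega)]
  rw [neumannFlux, add_sub_cancel_right, hN1, neumannExt_natCast_of_le u le_rfl, sub_self,
    zero_div]

theorem neumannFlux_succ_of_lt (u : ℕ → ℂ) {j : ℕ} (hj : j < N) :
    neumannFlux N x u (j + 1) = (u (j + 1) - u j) / meshDx N x j := by
  rw [neumannFlux, add_sub_cancel_right, ← Nat.cast_succ, neumannExt_natCast_of_le u hj,
    neumannExt_natCast_of_le u hj.le]

theorem dualMesh_mul_D2 (hN : 1 ≤ N) (hx : ∀ j, j < N → x j < x (j + 1)) (u : ℕ → ℂ)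
    (j : ℕ) :
    (dualMesh N x j : ℂ) * D2 N x u j
      = 2 * (neumannFlux N x u (j + 1) - neumannFlux N x u j) := by
  have hpos := meshDx_pos hN hx
  have hne : ∀ k, (meshDx N x k : ℂ) ≠ 0 := fun k => Complex.ofReal_ne_zero.2 (hpos k).ne'
  have hsum : (meshDx N x (j - 1) : ℂ) + meshDx N x j ≠ 0 := by
    exact_mod_cast (add_pos (hpos _) (hpos _)).ne'
  rw [dualMesh, neumannFlux, neumannFlux, add_sub_cancel_right, Complex.ofReal_add, D2]
  exact add_mul_three_point_stencil (hne _) (hne _) hsum _ _ _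

/-- Discrete Green identity: `D₂` is negative semidefinite for the mass-weighted inner product. -/
theorem sum_dualMesh_mul_D2_mul_conj (hN : 1 ≤ N) (hx : ∀ j, j < N → x j < x (j + 1))
    (u : ℕ → ℂ) :
    ∑ j ∈ range (N + 1), (dualMesh N x j : ℂ) * D2 N x u j * conj (u j)
      = ((-2 * ∑ j ∈ range N, ‖u (j + 1) - u j‖ ^ 2 / meshDx N x j : ℝ) : ℂ) := by
  set F : ℕ → ℂ := fun k => neumannFlux N x u k
  calc ∑ j ∈ range (N + 1), (dualMesh N x j : ℂ) * D2 N x u j * conj (u j)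
      = 2 * ∑ j ∈ range (N + 1), (F (j + 1) - F j) * conj (u j) := by
        rw [mul_sum]
        refine sum_congr rfl fun j _ => ?_
        rw [dualMesh_mul_D2 hN hx]
        simp only [F, Nat.cast_succ]
        ring
    _ = -2 * ∑ j ∈ range N, F (j + 1) * conj (u (j + 1) - u j) := by
        rw [sum_range_succ_sub_mul]
        simp only [F, Nat.cast_zero, Nat.cast_succ, neumannFlux_zero, neumannFlux_succ_self,
          map_sub]
        ring
    _ = _ := by
        push_cast
        congr 1
        refine sum_congr rfl fun j hj => ?_
        have hF : F (j + 1) = (u (j + 1) - u j) / meshDx N x j := by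
          simp only [F, Nat.cast_succ]
          exact neumannFlux_succ_of_lt u (mem_range.1 hj)
        rw [hF, div_mul_eq_mul_div, Complex.mul_conj']

theorem Mdis_sub (u v : ℕ → ℂ) :
    Mdis N x u - Mdis N x v
      = ∑ j ∈ range (N + 1), (‖u j‖ ^ 2 - ‖v j‖ ^ 2) / 2 * dualMesh N x j := by
  simp only [Mdis, dualMesh, ← mul_sub, ← sum_sub_distrib, mul_sum]
  exact sum_congr rfl fun j _ => by ring

end Mesh

theorem cn_scheme_mass_conservation_general
    (N : ℕ) (hN : 1 ≤ N) (x : ℕ → ℝ) (hx : ∀ j, j < N → x j < x (j + 1))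
    (Δt : ℝ) (hΔt : 0 < Δt) (ε : ℝ) (ftilde : ℕ → ℝ)
    (σ : ℕ) (u0 u1 : ℕ → ℂ)
    (hscheme : ∀ j ≤ N,
      Complex.I * (u1 j - u0 j) / (Δt : ℂ)
        + D2 N x (fun k => (u0 k + u1 k) / 2) j
        + ((‖(u0 j + u1 j) / 2‖ ^ (2 * σ) : ℝ) : ℂ) * ((u0 j + u1 j) / 2)
      = (ε : ℂ) * (ftilde j : ℂ) * ((u0 j + u1 j) / 2)) :
    Mdis N x u1 = Mdis N x u0 := by
  set w : ℕ → ℂ := fun k => (u0 k + u1 k) / 2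
  rw [← sub_eq_zero, Mdis_sub]
  calc ∑ j ∈ range (N + 1), (‖u1 j‖ ^ 2 - ‖u0 j‖ ^ 2) / 2 * dualMesh N x j
      = ∑ j ∈ range (N + 1), -Δt * ((dualMesh N x j : ℂ) * D2 N x w j * conj (w j)).im :=
        sum_congr rfl fun j hj => Complex.midpoint_mass_balance hΔt.ne'
          (by exact_mod_cast hscheme j (Nat.lt_succ_iff.1 (mem_range.1 hj))) _
    _ = -Δt * (∑ j ∈ range (N + 1), (dualMesh N x j : ℂ) * D2 N x w j * conj (w j)).im := by
        rw [Complex.im_sum, mul_sum]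
    _ = 0 := by rw [sum_dualMesh_mul_D2_mul_conj hN hx, Complex.ofReal_im, mul_zero]

/-- Mass conservation for the Crank–Nicolson (CN) scheme with discretized
multiplicative noise. -/
theorem cn_scheme_mass_conservation
    (N : ℕ) (hN : 1 ≤ N) (x : ℕ → ℝ) (hx : ∀ j, j < N → x j < x (j + 1))
    (Δt : ℝ) (hΔt : 0 < Δt) (ε : ℝ) (ftilde : ℕ → ℝ)
    (σ : ℕ) (hσ : 1 ≤ σ) (u0 u1 : ℕ → ℂ)
    (hscheme : ∀ j ≤ N,
      Complex.I * (u1 j - u0 j) / (Δt : ℂ)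
        + D2 N x (fun k => (u0 k + u1 k) / 2) j
        + ((‖(u0 j + u1 j) / 2‖ ^ (2 * σ) : ℝ) : ℂ) * ((u0 j + u1 j) / 2)
      = (ε : ℂ) * (ftilde j : ℂ) * ((u0 j + u1 j) / 2)) :
    Mdis N x u1 = Mdis N x u0 :=
  cn_scheme_mass_conservation_general N hN x hx Δt hΔt ε ftilde σ u0 u1 hscheme
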